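/- arXiv:2107.10446 — 3 statements merged into one kernel-verified Lean document; each statement's English description precedes it below -/
import Mathlib

section
/- Let K, Z, N be positive integers and let x^Q ∈ {0, 1/K, 2/K, ..., 1}^N with Σ_n x^Q_n ≤ Z. Then there exist binary vectors R_1, ..., R_K ∈ {0,1}^N such that Σ_{k=1}^K r_{k,n} = K x^Q_n for every n, and Σ_{n=1}^N r_{k,n} ≤ Z for every k. -/
/-!
Lay the `K x_n` units of item `n` out consecutively on the integers, item after item, and send
unit `t` to configuration `t % K`. An item occupies at most `K` consecutive units, so it meets every
residue class at most once; and the total length is at most `K Z`, so every residue class receives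
at most `Z` units.
-/

open Finset

namespace Nat

theorem card_filter_mod_Ico_le_one {K l : ℕ} (hl : l ≤ K) (a k : ℕ) :
    #{t ∈ Ico a (a + l) | t % K = k} ≤ 1 := by
  refine card_le_one.mpr fun s hs t ht => ?_
  simp only [mem_filter, mem_Ico] at hs ht
  have hst : s ≡ t [MOD K] := hs.2.trans ht.2.symm
  exact hst.eq_of_abs_lt (abs_sub_lt_iff.mpr ⟨by omega, by omega⟩)

theorem sum_card_filter_mod_eq_card {K : ℕ} (hK : 0 < K) (s : Finset ℕ) :
    ∑ k : Fin K, #{t ∈ s | t % K = k} = #s := by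
  rw [card_eq_sum_card_fiberwise (f := fun t => (⟨t % K, t.mod_lt hK⟩ : Fin K))
    (t := univ) fun _ _ => mem_univ _]
  simp only [Fin.ext_iff]

theorem card_filter_mod_range_le {K Z b : ℕ} (hb : b ≤ K * Z) (k : ℕ) :
    #{t ∈ range b | t % K = k} ≤ Z := by
  calc #{t ∈ range b | t % K = k} ≤ #(range Z) := by
        refine card_le_card_of_injOn (· / K) (fun t ht => ?_) fun s hs t ht hst => ?_
        · simp only [mem_coe, mem_filter, mem_range] at ht ⊢
          exact Nat.div_lt_of_lt_mul (ht.1.trans_le hb)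
        · simp only [mem_coe, mem_filter, mem_range] at hs ht
          replace hst : s / K = t / K := hst
          rw [← div_add_mod s K, ← div_add_mod t K, hst, hs.2, ht.2]
    _ = Z := card_range Z

theorem sum_card_filter_Ico_eq_card_filter_Ico {S : ℕ → ℕ} (hS : Monotone S) (p : ℕ → Prop)
    [DecidablePred p] (N : ℕ) :
    ∑ n ∈ range N, #{t ∈ Ico (S n) (S (n + 1)) | p t} = #{t ∈ Ico (S 0) (S N) | p t} := by
  induction N with
  | zero => simp
  | succ N ih =>
    rw [sum_range_succ, ih, card_filter, card_filter, card_filter,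
      sum_Ico_consecutive _ (hS N.zero_le) (hS N.le_succ)]

end Nat

theorem exists_binary_decomposition {K Z N : ℕ} (hK : 0 < K) (c : Fin N → ℕ)
    (hc : ∀ n, c n ≤ K) (hsum : ∑ n, c n ≤ K * Z) :
    ∃ r : Fin K → Fin N → ℕ,
      (∀ k n, r k n ≤ 1) ∧ (∀ n, ∑ k, r k n = c n) ∧ ∀ k, ∑ n, r k n ≤ Z := by
  set c' : ℕ → ℕ := fun m => if h : m < N then c ⟨m, h⟩ else 0
  have hc' (n : Fin N) : c' n = c n := by simp [c']
  set S : ℕ → ℕ := fun n => ∑ m ∈ range n, c' m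
  have hS (n : ℕ) : S (n + 1) = S n + c' n := sum_range_succ c' n
  have hSmono : Monotone S :=
    monotone_nat_of_le_succ fun n => by rw [hS n]; exact Nat.le_add_right _ _
  have hSN : S N = ∑ n, c n := by
    simp only [S, ← Fin.sum_univ_eq_sum_range, hc']
  refine ⟨fun k n => #{t ∈ Ico (S n) (S (n + 1)) | t % K = k}, fun k n => ?_, fun n => ?_,
    fun k => ?_⟩ <;> beta_reduce
  · rw [hS]
    exact Nat.card_filter_mod_Ico_le_one (by rw [hc']; exact hc n) _ _
  · rw [Nat.sum_card_filter_mod_eq_card hK, Nat.card_Ico, hS, hc']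
    omega
  · rw [Fin.sum_univ_eq_sum_range (fun n => #{t ∈ Ico (S n) (S (n + 1)) | t % K = k}),
      Nat.sum_card_filter_Ico_eq_card_filter_Ico hSmono, show S 0 = 0 from rfl,
      ← range_eq_Ico]
    exact Nat.card_filter_mod_range_le (hSN ▸ hsum) k

theorem stmt_11_general (K Z N : ℕ) (hK : 0 < K)
    (xQ : Fin N → ℝ)
    (hxQ : ∀ n, ∃ j : ℕ, j ≤ K ∧ xQ n = (j : ℝ) / K)
    (hsum : ∑ n, xQ n ≤ Z) :
    ∃ r : Fin K → Fin N → ℝ,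
      (∀ k n, r k n = 0 ∨ r k n = 1) ∧
      (∀ n, ∑ k, r k n = K * xQ n) ∧
      (∀ k, ∑ n, r k n ≤ Z) := by
  choose j hjK hjx using hxQ
  have hK' : (K : ℝ) ≠ 0 := by positivity
  have hKx (n : Fin N) : (K : ℝ) * xQ n = j n := by
    rw [hjx n]
    field_simp
  have hjsum : ∑ n, j n ≤ K * Z := by
    have : ∑ n, (j n : ℝ) ≤ K * Z := by
      simpa only [← hKx, ← mul_sum] using mul_le_mul_of_nonneg_left hsum (Nat.cast_nonneg K)
    exact_mod_cast this
  obtain ⟨r, hr01, hcol, hrow⟩ := exists_binary_decomposition hK j hjK hjsum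
  refine ⟨fun k n => r k n, fun k n => ?_, fun n => ?_, fun k => ?_⟩
  · rcases Nat.le_one_iff_eq_zero_or_eq_one.mp (hr01 k n) with h | h <;> simp [h]
  · rw [hKx, ← hcol n, Nat.cast_sum]
  · beta_reduce
    exact_mod_cast hrow k

/-- A fractional caching vector whose entries are multiples of `1/K` with total mass
at most `Z` can be decomposed into `K` capacity-feasible binary caching vectors. -/
theorem stmt_11 (K Z N : ℕ) (hK : 0 < K) (hZ : 0 < Z) (hN : 0 < N)
    (xQ : Fin N → ℝ)
    (hxQ : ∀ n, ∃ j : ℕ, j ≤ K ∧ xQ n = (j : ℝ) / K)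
    (hsum : ∑ n, xQ n ≤ Z) :
    ∃ r : Fin K → Fin N → ℝ,
      (∀ k n, r k n = 0 ∨ r k n = 1) ∧
      (∀ n, ∑ k, r k n = K * xQ n) ∧
      (∀ k, ∑ n, r k n ≤ Z) :=
  stmt_11_general K Z N hK xQ hxQ hsum
end

section
/- Consider the greedy routing solution: with services sorted so d_1 ≥ ... ≥ d_N, set y_n = x_n as long as J(Y) < d_n, and at the first n where raising y_n to x_n would make J(Y) > d_n, choose y_n ∈ [0, x_n] with J(Y) = d_n, setting all subsequent y_m = 0. Then this Y minimizes L(Y) = Σ_n λ_n y_n C(Σ_m λ_m y_m) + Σ_n λ_n(1−y_n)d_n over {Y : 0 ≤ y_n ≤ x_n}. -/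
/-!
Write `S = ∑ λ_m y_m` and `J = J(Y) = C(S) + S C'(S)`, the derivative of `s ↦ s C(s)` at `S`.
For every `J` and every feasible `Y'`, with `S' = ∑ λ_m y'_m`,
`L(Y') - L(Y) = [S' C(S') - S C(S) - J (S' - S)] + ∑ λ_n (y'_n - y_n)(J - d_n)`.
Since `C` is convex and nondecreasing on `[0, ∞)`, `s ↦ s C(s)` is convex there, so the bracket is
nonnegative by the tangent-line inequality. The greedy structure (`y_n = x_n` where `d_n > J`,
`y_n = 0` where `d_n < J`) makes every term of the sum nonnegative; these are the KKT conditions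
with multipliers `λ_n (d_n - J)₊` and `λ_n (J - d_n)₊`.
-/

open Finset Set

lemma ConvexOn.add_deriv_mul_sub_le {S : Set ℝ} {f : ℝ → ℝ} (hf : ConvexOn ℝ S f) {x y : ℝ}
    (hx : x ∈ S) (hy : y ∈ S) (hfx : DifferentiableAt ℝ f x) :
    f x + deriv f x * (y - x) ≤ f y := by
  rcases lt_trichotomy x y with hxy | rfl | hyx
  · have := hf.deriv_le_slope hx hy hxy hfx
    rw [slope_def_field, le_div_iff₀ (sub_pos.2 hxy)] at this
    linarith
  · simp
  · have := hf.slope_le_deriv hy hx hyx hfx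
    rw [slope_def_field, div_le_iff₀ (sub_pos.2 hyx)] at this
    linarith

lemma MonotoneOn.deriv_nonneg_of_mem_Ici {f : ℝ → ℝ} {a x : ℝ} (hf : MonotoneOn f (Ici a))
    (hx : x ∈ Ici a) (hfx : DifferentiableAt ℝ f x) : 0 ≤ deriv f x := by
  rw [← hfx.derivWithin (uniqueDiffOn_Ici a x hx)]
  exact hf.derivWithin_nonneg

lemma ConvexOn.add_mul_deriv_mul_sub_le {C : ℝ → ℝ} (hconv : ConvexOn ℝ (Ici 0) C)
    (hmono : MonotoneOn C (Ici 0)) {a b : ℝ} (ha : 0 ≤ a) (hb : 0 ≤ b)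
    (hdiff : DifferentiableAt ℝ C a) :
    (C a + a * deriv C a) * (b - a) ≤ b * C b - a * C a := by
  have htangent := hconv.add_deriv_mul_sub_le ha hb hdiff
  have hderiv := hmono.deriv_nonneg_of_mem_Ici ha hdiff
  nlinarith [mul_le_mul_of_nonneg_left htangent hb, mul_nonneg hderiv (sq_nonneg (b - a))]

lemma sub_mul_sub_nonneg_of_threshold {y y' x J d : ℝ} (hy'0 : 0 ≤ y') (hy'x : y' ≤ x)
    (hfull : J < d → y = x) (hzero : d < J → y = 0) : 0 ≤ (y' - y) * (J - d) := by
  rcases lt_trichotomy d J with hdJ | rfl | hJd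
  · rw [hzero hdJ]
    exact mul_nonneg (by linarith) (by linarith)
  · simp
  · rw [hfull hJd]
    exact mul_nonneg_of_nonpos_of_nonpos (by linarith) (by linarith)

section Latency

variable {ι : Type*} [Fintype ι]

def load (lam Y : ι → ℝ) : ℝ := ∑ m, lam m * Y m

def totalLatency (C : ℝ → ℝ) (lam d Y : ι → ℝ) : ℝ :=
  ∑ n, lam n * Y n * C (load lam Y) + ∑ n, lam n * (1 - Y n) * d n

lemma load_nonneg {lam Y : ι → ℝ} (hlam : ∀ n, 0 ≤ lam n) (hY : ∀ n, 0 ≤ Y n) :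
    0 ≤ load lam Y :=
  sum_nonneg fun n _ => mul_nonneg (hlam n) (hY n)

lemma totalLatency_sub_totalLatency (C : ℝ → ℝ) (lam d Y Y' : ι → ℝ) (J : ℝ) :
    totalLatency C lam d Y' - totalLatency C lam d Y =
      (load lam Y' * C (load lam Y') - load lam Y * C (load lam Y)
        - J * (load lam Y' - load lam Y)) + ∑ n, lam n * ((Y' n - Y n) * (J - d n)) := by
  simp only [totalLatency, load, sum_mul, mul_sum, ← sum_sub_distrib, ← sum_add_distrib]
  exact sum_congr rfl fun n _ => by ring

end Latency

theorem stmt_14_general (N : ℕ) (C : ℝ → ℝ)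
    (hCconv : ConvexOn ℝ (Set.Ici (0 : ℝ)) C)
    (hCmono : MonotoneOn C (Set.Ici (0 : ℝ)))
    (hCdiff : Differentiable ℝ C)
    (lam d x Y : Fin N → ℝ)
    (hlam : ∀ n, 0 ≤ lam n)
    (hfeas : ∀ n, 0 ≤ Y n ∧ Y n ≤ x n)
    (hgreedy1 : ∀ n,
      (C (∑ m, lam m * Y m) + (∑ m, lam m * Y m) * deriv C (∑ m, lam m * Y m)) < d n →
        Y n = x n)
    (hgreedy2 : ∀ n,
      d n < (C (∑ m, lam m * Y m) + (∑ m, lam m * Y m) * deriv C (∑ m, lam m * Y m)) →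
        Y n = 0) :
    ∀ Y' : Fin N → ℝ, (∀ n, 0 ≤ Y' n ∧ Y' n ≤ x n) →
      ((∑ n, lam n * Y n * C (∑ m, lam m * Y m)) + ∑ n, lam n * (1 - Y n) * d n) ≤
      ((∑ n, lam n * Y' n * C (∑ m, lam m * Y' m)) + ∑ n, lam n * (1 - Y' n) * d n) := by
  intro Y' hfeas'
  change totalLatency C lam d Y ≤ totalLatency C lam d Y'
  have hconvex := hCconv.add_mul_deriv_mul_sub_le hCmono
    (load_nonneg hlam fun n => (hfeas n).1) (load_nonneg hlam fun n => (hfeas' n).1) (hCdiff _)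
  have hkkt : 0 ≤ ∑ n, lam n * ((Y' n - Y n) *
      (C (load lam Y) + load lam Y * deriv C (load lam Y) - d n)) :=
    sum_nonneg fun n _ => mul_nonneg (hlam n) <|
      sub_mul_sub_nonneg_of_threshold (hfeas' n).1 (hfeas' n).2 (hgreedy1 n) (hgreedy2 n)
  linarith [totalLatency_sub_totalLatency C lam d Y Y'
    (C (load lam Y) + load lam Y * deriv C (load lam Y))]

/-- Optimality of the greedy routing solution: if services are sorted with `d`
decreasing and the routing vector `Y` satisfies the greedy threshold structure
(`y_n = x_n` whenever `d_n > J(Y)` and `y_n = 0` whenever `d_n < J(Y)`), then `Y`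
minimizes the total latency `L` over `{Y' : 0 ≤ y'_n ≤ x_n}`. -/
theorem stmt_14 (N : ℕ) (C : ℝ → ℝ)
    (hCconv : ConvexOn ℝ (Set.Ici (0 : ℝ)) C)
    (hCmono : MonotoneOn C (Set.Ici (0 : ℝ)))
    (hCdiff : Differentiable ℝ C)
    (lam d x Y : Fin N → ℝ)
    (hlam : ∀ n, 0 ≤ lam n) (hx : ∀ n, 0 ≤ x n)
    (hd : ∀ n, C 0 ≤ d n) (hsorted : Antitone d)
    (hfeas : ∀ n, 0 ≤ Y n ∧ Y n ≤ x n)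
    (hgreedy1 : ∀ n,
      (C (∑ m, lam m * Y m) + (∑ m, lam m * Y m) * deriv C (∑ m, lam m * Y m)) < d n →
        Y n = x n)
    (hgreedy2 : ∀ n,
      d n < (C (∑ m, lam m * Y m) + (∑ m, lam m * Y m) * deriv C (∑ m, lam m * Y m)) →
        Y n = 0) :
    ∀ Y' : Fin N → ℝ, (∀ n, 0 ≤ Y' n ∧ Y' n ≤ x n) →
      ((∑ n, lam n * Y n * C (∑ m, lam m * Y m)) + ∑ n, lam n * (1 - Y n) * d n) ≤
      ((∑ n, lam n * Y' n * C (∑ m, lam m * Y' m)) + ∑ n, lam n * (1 - Y' n) * d n) :=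
  stmt_14_general N C hCconv hCmono hCdiff lam d x Y hlam hfeas hgreedy1 hgreedy2
end

section
/- Let v ∈ ℝ^N and define x'_n = min(1, max(0, v_n)). If Σ_n x'_n ≤ Z, then X' is the Euclidean projection of v onto the set S = {X ∈ ℝ^N : 0 ≤ x_n ≤ 1, Σ_n x_n ≤ Z}. If Σ_n x'_n > Z, then the Euclidean projection X* of v onto S satisfies Σ_n x*_n = Z. -/
/-!
The box is a product of intervals, so clipping coordinatewise gives the nearest point of the box,
and in particular of `S` when it lies in `S`. If the projection `X*` onto `S` had slack,
`∑ X* < Z < ∑ X'`, then some point of the open segment from `X*` to `X'` has coordinate sum `Z`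
and hence lies in `S`; since `X'` is no farther from `v` than `X*`, strict convexity of the
Euclidean ball makes that point strictly closer to `v` than `X*`, a contradiction.
-/

open Finset Metric

lemma abs_sub_clip_le {a lo hi w : ℝ} (hlo : lo ≤ w) (hhi : w ≤ hi) :
    |a - min hi (max lo a)| ≤ |a - w| := by
  rcases le_total a lo with h | h
  · rw [max_eq_left h, min_eq_right (hlo.trans hhi), abs_of_nonpos (by linarith),
      abs_of_nonpos (by linarith)]
    linarith
  rcases le_total a hi with h' | h'
  · simp [max_eq_right h, min_eq_right h']
  · rw [max_eq_right h, min_eq_left h', abs_of_nonneg (by linarith), abs_of_nonneg (by linarith)]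
    linarith

namespace EuclideanSpace

variable {ι : Type*} [Fintype ι]

lemma norm_le_norm_of_forall_abs_le {x y : EuclideanSpace ℝ ι} (h : ∀ i, |x i| ≤ |y i|) :
    ‖x‖ ≤ ‖y‖ := by
  simp only [EuclideanSpace.norm_eq, Real.norm_eq_abs]
  exact Real.sqrt_le_sqrt (sum_le_sum fun i _ => pow_le_pow_left₀ (abs_nonneg _) (h i) 2)

lemma exists_mem_openSegment_sum_eq {x y : EuclideanSpace ℝ ι} {Z : ℝ}
    (hx : ∑ i, x i < Z) (hy : Z < ∑ i, y i) :
    ∃ w ∈ openSegment ℝ x y, ∑ i, w i = Z := by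
  let total : EuclideanSpace ℝ ι →ₗ[ℝ] ℝ := ∑ i, (EuclideanSpace.proj i).toLinearMap
  have htotal (w : EuclideanSpace ℝ ι) : total w = ∑ i, w i := by simp [total]
  have hZ : Z ∈ openSegment ℝ (total x) (total y) := by
    rw [htotal, htotal, openSegment_eq_Ioo (hx.trans hy)]
    exact ⟨hx, hy⟩
  obtain ⟨w, hw, rfl⟩ := image_openSegment ℝ total.toAffineMap x y ▸ hZ
  exact ⟨w, hw, (htotal w).symm⟩

lemma norm_sub_clip_le {v X' w : EuclideanSpace ℝ ι} (hX' : ∀ i, X' i = min 1 (max 0 (v i)))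
    (hw : ∀ i, 0 ≤ w i ∧ w i ≤ 1) : ‖v - X'‖ ≤ ‖v - w‖ :=
  norm_le_norm_of_forall_abs_le fun i => by
    simpa only [PiLp.sub_apply, hX'] using abs_sub_clip_le (a := v i) (hw i).1 (hw i).2

end EuclideanSpace

theorem stmt_15_general (N : ℕ) (Z : ℝ)
    (v X' : EuclideanSpace ℝ (Fin N))
    (hX' : ∀ n, X' n = min 1 (max 0 (v n))) :
    ((∑ n, X' n ≤ Z) →
      X' ∈ {X : EuclideanSpace ℝ (Fin N) | (∀ n, 0 ≤ X n ∧ X n ≤ 1) ∧ ∑ n, X n ≤ Z} ∧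
        ∀ w ∈ {X : EuclideanSpace ℝ (Fin N) | (∀ n, 0 ≤ X n ∧ X n ≤ 1) ∧ ∑ n, X n ≤ Z},
          ‖v - X'‖ ≤ ‖v - w‖) ∧
    ((Z < ∑ n, X' n) →
      ∀ Xstar : EuclideanSpace ℝ (Fin N),
        (Xstar ∈ {X : EuclideanSpace ℝ (Fin N) | (∀ n, 0 ≤ X n ∧ X n ≤ 1) ∧ ∑ n, X n ≤ Z} ∧
          ∀ w ∈ {X : EuclideanSpace ℝ (Fin N) | (∀ n, 0 ≤ X n ∧ X n ≤ 1) ∧ ∑ n, X n ≤ Z},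
            ‖v - Xstar‖ ≤ ‖v - w‖) →
        ∑ n, Xstar n = Z) := by
  have hX'_box (n : Fin N) : 0 ≤ X' n ∧ X' n ≤ 1 :=
    hX' n ▸ ⟨le_min zero_le_one (le_max_left _ _), min_le_left _ _⟩
  refine ⟨fun hsum => ⟨⟨hX'_box, hsum⟩, fun w hw => ?_⟩, ?_⟩
  · exact EuclideanSpace.norm_sub_clip_le hX' hw.1
  rintro hgt Xstar ⟨⟨hXstar_box, hXstar_sum⟩, hXstar_min⟩
  by_contra hne
  obtain ⟨w, hw_seg, hw_sum⟩ :=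
    EuclideanSpace.exists_mem_openSegment_sum_eq (hXstar_sum.lt_of_ne hne) hgt
  have hw_box (n : Fin N) : 0 ≤ w n ∧ w n ≤ 1 := by
    obtain ⟨a, b, ha, hb, hab, rfl⟩ := hw_seg
    simpa using convex_Icc (0 : ℝ) 1 (hXstar_box n) (hX'_box n) ha.le hb.le hab
  have hw_closer : ‖v - w‖ < ‖v - Xstar‖ := by
    have hXstar_ne : Xstar ≠ X' := by rintro rfl; linarith
    have hX'_closer : X' ∈ closedBall v ‖v - Xstar‖ := by
      rw [mem_closedBall', dist_eq_norm]; exact EuclideanSpace.norm_sub_clip_le hX' hXstar_box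
    have := openSegment_subset_ball_of_ne (mem_closedBall'.2 (dist_eq_norm v Xstar).le)
      hX'_closer hXstar_ne hw_seg
    rwa [mem_ball', dist_eq_norm] at this
  exact (hXstar_min w ⟨hw_box, hw_sum.le⟩).not_gt hw_closer

/-- Projection onto the capacitated box `S = {X : 0 ≤ x_n ≤ 1, ∑ x_n ≤ Z}`:
if the coordinatewise clipping `x'` of `v` to `[0,1]` satisfies `∑ x'_n ≤ Z` then it
is the Euclidean projection of `v` onto `S`; otherwise the Euclidean projection `X*`
satisfies `∑ x*_n = Z`. -/
theorem stmt_15 (N : ℕ) (Z : ℝ) (hZ : 0 ≤ Z)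
    (v X' : EuclideanSpace ℝ (Fin N))
    (hX' : ∀ n, X' n = min 1 (max 0 (v n))) :
    ((∑ n, X' n ≤ Z) →
      X' ∈ {X : EuclideanSpace ℝ (Fin N) | (∀ n, 0 ≤ X n ∧ X n ≤ 1) ∧ ∑ n, X n ≤ Z} ∧
        ∀ w ∈ {X : EuclideanSpace ℝ (Fin N) | (∀ n, 0 ≤ X n ∧ X n ≤ 1) ∧ ∑ n, X n ≤ Z},
          ‖v - X'‖ ≤ ‖v - w‖) ∧
    ((Z < ∑ n, X' n) →
      ∀ Xstar : EuclideanSpace ℝ (Fin N),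
        (Xstar ∈ {X : EuclideanSpace ℝ (Fin N) | (∀ n, 0 ≤ X n ∧ X n ≤ 1) ∧ ∑ n, X n ≤ Z} ∧
          ∀ w ∈ {X : EuclideanSpace ℝ (Fin N) | (∀ n, 0 ≤ X n ∧ X n ≤ 1) ∧ ∑ n, X n ≤ Z},
            ‖v - Xstar‖ ≤ ‖v - w‖) →
        ∑ n, Xstar n = Z) :=
  stmt_15_general N Z v X' hX'
end
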